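/- arXiv:1603.02107 — 5 statements merged into one kernel-verified Lean document; each statement's English description precedes it below -/
import Mathlib

section
/- Let κ : Ordinal → Ordinal be a normal (strictly increasing and continuous) function with κ(0) = 0 such that κ(α) is additively indecomposable for a fixed α, and let ν be a fixed ordinal divisible by κ(α). Then the map ι defined on ordinals of the form α·δ + γ (γ < α) by ι(α·δ + γ) = ν + κ(α)·δ + κ(γ) is strictly increasing. -/
open Ordinal

/-- The map ι(α·δ + γ) = ν + κ(α)·δ + κ(γ) (γ < α) is strictly increasing,
where κ is normal with κ 0 = 0, κ γ < κ α for γ < α, κ α is additively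
indecomposable, and ν is divisible by κ α. -/
theorem stmt2 (κ : Ordinal → Ordinal) (α ν : Ordinal)
    (hκ : Order.IsNormal κ) (h0 : κ 0 = 0)
    (hlt : ∀ γ < α, κ γ < κ α)
    (hind : ∀ β γ : Ordinal, β < κ α → γ < κ α → β + γ < κ α)
    (hν : ∃ ξ, ν = κ α * ξ) :
    ∀ δ₁ γ₁ δ₂ γ₂ : Ordinal, γ₁ < α → γ₂ < α →
      α * δ₁ + γ₁ < α * δ₂ + γ₂ →
      ν + κ α * δ₁ + κ γ₁ < ν + κ α * δ₂ + κ γ₂ := by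
  intro δ₁ γ₁ δ₂ γ₂ h1 h2 hlt'
  have hδ : δ₁ ≤ δ₂ := by
    by_contra h
    push_neg at h
    have : α * δ₂ + γ₂ < α * δ₁ + γ₁ :=
      calc α * δ₂ + γ₂ < α * δ₂ + α := add_lt_add_right h2 _
        _ = α * (δ₂ + 1) := (mul_add_one α δ₂).symm
        _ ≤ α * δ₁ := mul_le_mul_right (Order.add_one_le_of_lt h) α
        _ ≤ α * δ₁ + γ₁ := le_self_add
    exact absurd hlt' (not_lt.2 this.le)
  rcases lt_or_eq_of_le hδ with h | h
  · have key : κ α * δ₁ + κ γ₁ < κ α * δ₂ + κ γ₂ :=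
      calc κ α * δ₁ + κ γ₁ < κ α * δ₁ + κ α := add_lt_add_right (hlt _ h1) _
        _ = κ α * (δ₁ + 1) := (mul_add_one _ _).symm
        _ ≤ κ α * δ₂ := mul_le_mul_right (Order.add_one_le_of_lt h) _
        _ ≤ κ α * δ₂ + κ γ₂ := le_self_add
    calc ν + κ α * δ₁ + κ γ₁ = ν + (κ α * δ₁ + κ γ₁) := by rw [add_assoc]
      _ < ν + (κ α * δ₂ + κ γ₂) := add_lt_add_right key _
      _ = ν + κ α * δ₂ + κ γ₂ := by rw [add_assoc]
  · subst h
    have hγ : γ₁ < γ₂ := by rwa [add_lt_add_iff_left] at hlt'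
    exact add_lt_add_right (hκ.strictMono hγ) _
end

section
/- If ι : Ordinal → Ordinal is defined on an initial segment by ι(α·δ + γ) = ν + κ_α·δ + κ_γ for γ < α, where γ ↦ κ_γ is normal (strictly increasing and continuous) with κ_0 = 0 and κ_α additively indecomposable, then ι is continuous: for every limit ordinal λ in its domain, ι(λ) = sup of ι(λ') over λ' < λ. -/
/-!
Writing `x = α * δ + γ` with `γ < α`, the map `ι` is `ν + (κ α * δ + κ γ)`: it replaces the base `α`
by `κ α` and the digit `γ` by `κ γ`. This map is normal. It is strictly monotone because
`κ γ < κ α`, so the digit never overtakes the next multiple of `κ α`. It is continuous at a limit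
`x`: either its digit `γ` is a limit, where continuity of `κ` applies, or `γ = 0`, and then
`x = α * (d + 1)` (continuity of `κ` at the limit `α`) or `x = α * δ` with `δ` a limit
(continuity of `δ ↦ κ α * δ`). A normal function is the supremum of its earlier values at
every limit, and `ι` agrees with it up to `lamMax`.
-/

open Ordinal Order Set

namespace Ordinal

theorem mul_add_lt_mul_of_lt {a b c d : Ordinal} (hc : c < a) (hbd : b < d) :
    a * b + c < a * d :=
  calc a * b + c < a * b + a := add_lt_add_right hc _
    _ = a * (b + 1) := (mul_add_one a b).symm
    _ ≤ a * d := mul_le_mul_right (add_one_le_of_lt hbd) _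

theorem mul_add_div_of_lt {a b c : Ordinal} (hc : c < a) : (a * b + c) / a = b := by
  rw [mul_add_div _ (pos_of_gt hc).ne', div_eq_zero_of_lt hc, add_zero]

theorem mul_add_mod_of_lt {a b c : Ordinal} (hc : c < a) : (a * b + c) % a = c := by
  rw [mul_add_mod_self, mod_eq_of_lt hc]

theorem isSuccLimit_of_omega0_opow_eq {α : Ordinal} (h : ω ^ α = α) : IsSuccLimit α := by
  have hα : α ≠ 0 := by
    rintro rfl
    simp at h
  exact h ▸ isSuccLimit_opow_left isSuccLimit_omega0 hα

/-- `divModLift κ α (α * δ + γ) = κ α * δ + κ γ` for `γ < α`. -/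
noncomputable def divModLift (κ : Ordinal → Ordinal) (α x : Ordinal) : Ordinal :=
  κ α * (x / α) + κ (x % α)

variable {κ : Ordinal → Ordinal} {α : Ordinal}

theorem divModLift_mul_add {δ γ : Ordinal} (hγ : γ < α) :
    divModLift κ α (α * δ + γ) = κ α * δ + κ γ := by
  rw [divModLift, mul_add_div_of_lt hγ, mul_add_mod_of_lt hγ]

theorem exists_mul_add_eq (hα : α ≠ 0) (x : Ordinal) : ∃ δ, ∃ γ < α, α * δ + γ = x :=
  ⟨_, _, mod_lt x hα, div_add_mod x α⟩

theorem strictMono_divModLift (hκ : StrictMono κ) : StrictMono (divModLift κ α) := by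
  intro x y hxy
  rcases eq_or_ne α 0 with rfl | hα
  · simpa [divModLift] using hκ hxy
  obtain ⟨δ, γ, hγ, rfl⟩ := exists_mul_add_eq hα x
  obtain ⟨δ', γ', hγ', rfl⟩ := exists_mul_add_eq hα y
  rw [divModLift_mul_add hγ, divModLift_mul_add hγ']
  obtain hδ | rfl | hδ := lt_trichotomy δ δ'
  · exact (mul_add_lt_mul_of_lt (hκ hγ) hδ).trans_le le_self_add
  · exact add_lt_add_right (hκ ((add_lt_add_iff_left _).1 hxy)) _
  · exact absurd hxy ((mul_add_lt_mul_of_lt hγ' hδ).trans_le le_self_add).not_gt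

theorem isNormal_divModLift (hκ : IsNormal κ) (h0 : κ 0 = 0) (hα : IsSuccLimit α) :
    IsNormal (divModLift κ α) := by
  refine isNormal_iff.2 ⟨strictMono_divModLift hκ.strictMono, fun x hx a ha => ?_⟩
  obtain ⟨δ, γ, hγ, rfl⟩ := exists_mul_add_eq hα.ne_bot x
  have lift_le {d g : Ordinal} (hg : g < α) (hlt : α * d + g < α * δ + γ) : κ α * d + κ g ≤ a :=
    divModLift_mul_add hg ▸ ha _ hlt
  have hκ_shift (c : Ordinal) : IsNormal fun g => c + κ g := (isNormal_add_right c).comp hκ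
  rw [divModLift_mul_add hγ]
  rcases zero_or_succ_or_isSuccLimit γ with rfl | ⟨g, rfl⟩ | hγlim
  · rw [add_zero] at hx lift_le
    rw [h0, add_zero]
    rcases zero_or_succ_or_isSuccLimit δ with rfl | ⟨d, rfl⟩ | hδ
    · simp at hx
    · rw [succ_eq_add_one, mul_add_one] at lift_le ⊢
      rw [(hκ_shift _).le_iff_forall_le hα]
      exact fun g hg => lift_le hg (add_lt_add_right hg _)
    · have hκα : 0 < κ α := h0 ▸ hκ.strictMono hα.bot_lt
      rw [(isNormal_mul_right hκα).le_iff_forall_le hδ]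
      intro d hd
      have hlt : α * d + 0 < α * δ := by
        simpa only [add_zero] using (isNormal_mul_right hα.bot_lt).strictMono hd
      simpa only [h0, add_zero] using lift_le (g := 0) hα.bot_lt hlt
  · rw [succ_eq_add_one, ← add_assoc] at hx
    exact absurd hx (not_isSuccLimit_succ _)
  · rw [(hκ_shift _).le_iff_forall_le hγlim]
    exact fun g hg => lift_le (hg.trans hγ) (add_lt_add_right hg _)

end Ordinal

theorem stmt4_general (κ : Ordinal → Ordinal) (α ν lamMax : Ordinal)
    (ι : Ordinal → Ordinal)
    (hκ : Order.IsNormal κ) (h0 : κ 0 = 0)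
    (heps : (omega0 : Ordinal) ^ α = α)
    (hι : ∀ δ γ : Ordinal, γ < α → α * δ + γ ≤ lamMax →
      ι (α * δ + γ) = ν + κ α * δ + κ γ) :
    ∀ l ≤ lamMax, Order.IsSuccLimit l → ι l = ⨆ β : Set.Iio l, ι β.1 := by
  intro l hl hlim
  have hα := isSuccLimit_of_omega0_opow_eq heps
  have hι_eq {x : Ordinal} (hx : x ≤ lamMax) : ι x = ν + divModLift κ α x := by
    obtain ⟨δ, γ, hγ, rfl⟩ := exists_mul_add_eq hα.ne_bot x
    rw [hι _ _ hγ hx, divModLift_mul_add hγ, add_assoc]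
  have hnormal := (isNormal_add_right ν).comp (isNormal_divModLift hκ h0 hα)
  calc ι l = ν + divModLift κ α l := hι_eq hl
    _ = ⨆ β : Iio l, ν + divModLift κ α β := hnormal.apply_of_isSuccLimit hlim
    _ = ⨆ β : Iio l, ι β := iSup_congr fun β => (hι_eq (β.2.le.trans hl)).symm

/-- ι defined by ι(α·δ + γ) = ν + κ_α·δ + κ_γ on an initial segment is
continuous: at every limit ordinal in its domain, ι(λ) is the supremum of the
earlier values. -/
theorem stmt4 (κ : Ordinal → Ordinal) (α ν lamMax : Ordinal)
    (ι : Ordinal → Ordinal)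
    (hκ : Order.IsNormal κ) (h0 : κ 0 = 0)
    (hind : ∀ β γ : Ordinal, β < κ α → γ < κ α → β + γ < κ α)
    (heps : (omega0 : Ordinal) ^ α = α)
    (hν : ∃ ξ, ν = κ α * ξ)
    (hι : ∀ δ γ : Ordinal, γ < α → α * δ + γ ≤ lamMax →
      ι (α * δ + γ) = ν + κ α * δ + κ γ) :
    ∀ l ≤ lamMax, Order.IsSuccLimit l → ι l = ⨆ β : Set.Iio l, ι β.1 :=
  stmt4_general κ α ν lamMax ι hκ h0 heps hι
end

section
/- Define φ on ordinals of the form ν + κ_α·δ + χ with χ < κ_α by φ(ν + κ_α·δ + χ) = α·δ + index(χ), where index(χ) is the unique γ with κ_γ ≤ χ < κ_{γ+1} (and index(0) = 0). Then φ is weakly order preserving: if ν ≤ σ ≤ τ then φ(σ) ≤ φ(τ). -/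
/-! Above `ν`, the order on `ν + κ_α·δ + χ` (`χ < κ_α`) is lexicographic in `(δ, χ)`. The index
map is monotone on `[0, κ_α)` because `κ` is monotone and `index χ` brackets `χ` between
consecutive values of `κ`; and `index χ ≤ α`, so a step in `δ` (worth `α`) outweighs any change
of the index. -/

open Ordinal Order Set

theorem Monotone.le_of_map_le_of_lt_map_succ {α β : Type*} [LinearOrder α] [SuccOrder α]
    [Preorder β] {κ : α → β} (hκ : Monotone κ) {i j : α} {x y : β} (hx : κ i ≤ x) (hxy : x ≤ y)
    (hy : y < κ (succ j)) : i ≤ j :=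
  le_of_not_gt fun hji => ((hκ (succ_le_of_lt hji)).trans (hx.trans hxy)).not_gt hy

namespace Ordinal

theorem exists_eq_add_mul_add {b ν ρ : Ordinal} (hb : b ≠ 0) (hνρ : ν ≤ ρ) :
    ∃ δ χ, χ < b ∧ ρ = ν + b * δ + χ :=
  ⟨(ρ - ν) / b, (ρ - ν) % b, mod_lt _ hb, by
    rw [add_assoc, div_add_mod, Ordinal.add_sub_cancel_of_le hνρ]⟩

theorem lt_or_eq_and_le_of_mul_add_le {b δ₁ δ₂ χ₁ χ₂ : Ordinal}
    (h : b * δ₁ + χ₁ ≤ b * δ₂ + χ₂) (hχ₂ : χ₂ < b) : δ₁ < δ₂ ∨ δ₁ = δ₂ ∧ χ₁ ≤ χ₂ := by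
  rcases lt_trichotomy δ₁ δ₂ with hlt | rfl | hgt
  · exact Or.inl hlt
  · exact Or.inr ⟨rfl, (add_le_add_iff_left _).1 h⟩
  · exfalso
    refine h.not_gt ?_
    calc b * δ₂ + χ₂ < b * succ δ₂ := by rwa [mul_succ, add_lt_add_iff_left]
      _ ≤ b * δ₁ := mul_le_mul_right (succ_le_of_lt hgt) _
      _ ≤ b * δ₁ + χ₁ := le_self_add

theorem mul_add_le_mul_add_of_le {a b δ₁ δ₂ χ₁ χ₂ : Ordinal} {g : Ordinal → Ordinal}
    (hg : MonotoneOn g (Iio b)) (hga : ∀ χ < b, g χ ≤ a) (h : b * δ₁ + χ₁ ≤ b * δ₂ + χ₂)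
    (hχ₁ : χ₁ < b) (hχ₂ : χ₂ < b) : a * δ₁ + g χ₁ ≤ a * δ₂ + g χ₂ := by
  rcases lt_or_eq_and_le_of_mul_add_le h hχ₂ with hlt | ⟨rfl, hle⟩
  · calc a * δ₁ + g χ₁ ≤ a * succ δ₁ := by rw [mul_succ]; exact add_le_add_right (hga χ₁ hχ₁) _
      _ ≤ a * δ₂ := mul_le_mul_right (succ_le_of_lt hlt) _
      _ ≤ a * δ₂ + g χ₂ := le_self_add
  · exact add_le_add_right (hg hχ₁ hχ₂ hle) _

end Ordinal

theorem stmt6_general (κ : Ordinal → Ordinal) (α ν lam : Ordinal)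
    (index : Ordinal → Ordinal) (φ : Ordinal → Ordinal)
    (hκ : Order.IsNormal κ)
    (hidx0 : index 0 = 0)
    (hidx : ∀ χ : Ordinal, 0 < χ → χ < κ α →
      index χ < α ∧ κ (index χ) ≤ χ ∧ χ < κ (index χ + 1))
    (hφ : ∀ δ χ : Ordinal, χ < κ α → φ (ν + κ α * δ + χ) = α * δ + index χ) :
    ∀ σ τ : Ordinal, ν ≤ σ → σ ≤ τ → τ < ν + κ α * lam → φ σ ≤ φ τ := by
  intro σ τ hνσ hστ hτ
  have hκα : κ α ≠ 0 := by
    rintro h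
    rw [h, zero_mul, add_zero] at hτ
    exact (hνσ.trans hστ).not_gt hτ
  have index_le : ∀ χ < κ α, index χ ≤ α := by
    intro χ hχ
    rcases (zero_le (a := χ)).eq_or_lt with rfl | hpos
    · rw [hidx0]; exact zero_le
    · exact (hidx χ hpos hχ).1.le
  have index_mono : MonotoneOn index (Iio (κ α)) := by
    intro χ₁ hχ₁ χ₂ hχ₂ hle
    rcases (zero_le (a := χ₁)).eq_or_lt with rfl | hpos
    · rw [hidx0]; exact zero_le
    · exact hκ.monotone.le_of_map_le_of_lt_map_succ (hidx χ₁ hpos hχ₁).2.1 hle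
        (hidx χ₂ (hpos.trans_le hle) hχ₂).2.2
  obtain ⟨δ₁, χ₁, hχ₁, rfl⟩ := exists_eq_add_mul_add hκα hνσ
  obtain ⟨δ₂, χ₂, hχ₂, rfl⟩ := exists_eq_add_mul_add hκα (hνσ.trans hστ)
  rw [hφ δ₁ χ₁ hχ₁, hφ δ₂ χ₂ hχ₂]
  refine mul_add_le_mul_add_of_le index_mono index_le ?_ hχ₁ hχ₂
  simpa only [add_assoc, add_le_add_iff_left] using hστ

/-- φ defined by φ(ν + κ_α·δ + χ) = α·δ + index(χ) (χ < κ_α) is weakly order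
preserving: if ν ≤ σ ≤ τ (within the domain) then φ(σ) ≤ φ(τ). -/
theorem stmt6 (κ : Ordinal → Ordinal) (α ν lam : Ordinal)
    (index : Ordinal → Ordinal) (φ : Ordinal → Ordinal)
    (hκ : Order.IsNormal κ) (h0 : κ 0 = 0)
    (hind : ∀ β γ : Ordinal, β < κ α → γ < κ α → β + γ < κ α)
    (hν : ∃ ξ, ν = κ α * ξ)
    (hidx0 : index 0 = 0)
    (hidx : ∀ χ : Ordinal, 0 < χ → χ < κ α →
      index χ < α ∧ κ (index χ) ≤ χ ∧ χ < κ (index χ + 1))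
    (hφ : ∀ δ χ : Ordinal, χ < κ α → φ (ν + κ α * δ + χ) = α * δ + index χ) :
    ∀ σ τ : Ordinal, ν ≤ σ → σ ≤ τ → τ < ν + κ α * lam → φ σ ≤ φ τ :=
  stmt6_general κ α ν lam index φ hκ hidx0 hidx hφ
end

section
/- With ι(α·δ + γ) = ν + κ_α·δ + κ_γ and φ(ν + κ_α·δ + χ) = α·δ + index(χ) as above, φ extends ι⁻¹: for every λ in the domain of ι, φ(ι(λ)) = λ. Moreover ι(λ) is the least σ with φ(σ) = λ. -/
open Ordinal

/-! Writing `λ = α·δ + γ` with `γ < α`, the point `ι λ = ν + κ_α·δ + κ_γ` is sent by `φ` to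
`α·δ + index κ_γ = λ`, since `index` inverts `κ` below `α`. Conversely, if
`φ (ν + κ_α·δ' + χ) = α·δ' + index χ = λ`, uniqueness of ordinal division gives `δ' = δ` and
`index χ = γ`, whence `κ_γ = κ_{index χ} ≤ χ`. -/

namespace Ordinal

theorem mul_add_div_eq_and_mod_eq {a b c : Ordinal} (hc : c < a) :
    (a * b + c) / a = b ∧ (a * b + c) % a = c := by
  have ha : a ≠ 0 := (pos_of_gt hc).ne'
  refine ⟨?_, ?_⟩
  · rw [mul_add_div _ ha, div_eq_zero_of_lt hc, add_zero]
  · rw [mul_add_mod_self, mod_eq_of_lt hc]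

theorem ne_zero_of_omega0_opow_eq_self {α : Ordinal} (h : ω ^ α = α) : α ≠ 0 := by
  rintro rfl
  simp at h

end Ordinal

section IndexInverse

variable {κ index : Ordinal → Ordinal} {α : Ordinal}

theorem apply_index_le (h0 : κ 0 = 0) (hidx0 : index 0 = 0)
    (hidx : ∀ χ, 0 < χ → χ < κ α → κ (index χ) ≤ χ ∧ χ < κ (index χ + 1))
    {χ : Ordinal} (hχ : χ < κ α) : κ (index χ) ≤ χ := by
  rcases (zero_le (a := χ)).eq_or_lt with rfl | hpos
  · rw [hidx0, h0]
  · exact (hidx χ hpos hχ).1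

theorem index_lt (hκ : StrictMono κ) (h0 : κ 0 = 0) (hidx0 : index 0 = 0)
    (hidx : ∀ χ, 0 < χ → χ < κ α → κ (index χ) ≤ χ ∧ χ < κ (index χ + 1))
    {χ : Ordinal} (hχ : χ < κ α) : index χ < α :=
  hκ.lt_iff_lt.1 ((apply_index_le h0 hidx0 hidx hχ).trans_lt hχ)

theorem index_apply (hκ : StrictMono κ) (h0 : κ 0 = 0) (hidx0 : index 0 = 0)
    (hidx : ∀ χ, 0 < χ → χ < κ α → κ (index χ) ≤ χ ∧ χ < κ (index χ + 1))
    {γ : Ordinal} (hγ : γ < α) : index (κ γ) = γ := by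
  rcases (zero_le (a := γ)).eq_or_lt with rfl | hpos
  · rw [h0, hidx0]
  · obtain ⟨hle, hlt⟩ := hidx (κ γ) (h0 ▸ hκ hpos) (hκ hγ)
    exact le_antisymm (hκ.le_iff_le.1 hle) (Order.lt_add_one_iff.1 (hκ.lt_iff_lt.1 hlt))

end IndexInverse

theorem stmt7_general (κ : Ordinal → Ordinal) (α ν lamMax : Ordinal)
    (index : Ordinal → Ordinal) (ι φ : Ordinal → Ordinal)
    (hκ : Order.IsNormal κ) (h0 : κ 0 = 0)
    (heps : (omega0 : Ordinal) ^ α = α)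
    (hidx0 : index 0 = 0)
    (hidx : ∀ χ : Ordinal, 0 < χ → χ < κ α →
      index χ < α ∧ κ (index χ) ≤ χ ∧ χ < κ (index χ + 1))
    (hι : ∀ δ γ : Ordinal, γ < α → α * δ + γ ≤ lamMax →
      ι (α * δ + γ) = ν + κ α * δ + κ γ)
    (hφ : ∀ δ χ : Ordinal, χ < κ α → φ (ν + κ α * δ + χ) = α * δ + index χ) :
    ∀ l ≤ lamMax, φ (ι l) = l ∧
      ∀ σ : Ordinal, (∃ δ χ, χ < κ α ∧ σ = ν + κ α * δ + χ) → φ σ = l →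
        ι l ≤ σ := by
  intro l hl
  have hspec : ∀ χ, 0 < χ → χ < κ α → κ (index χ) ≤ χ ∧ χ < κ (index χ + 1) :=
    fun χ hpos hχ => (hidx χ hpos hχ).2
  have hmod : l % α < α := mod_lt l (ne_zero_of_omega0_opow_eq_self heps)
  have hιl : ι l = ν + κ α * (l / α) + κ (l % α) := by
    simpa only [div_add_mod] using hι (l / α) (l % α) hmod ((div_add_mod l α).trans_le hl)
  refine ⟨?_, ?_⟩
  · rw [hιl, hφ _ _ (hκ.strictMono hmod), index_apply hκ.strictMono h0 hidx0 hspec hmod,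
      div_add_mod]
  · rintro σ ⟨δ, χ, hχ, rfl⟩ hφσ
    rw [hφ δ χ hχ] at hφσ
    obtain ⟨hδ, hγ⟩ := hφσ ▸ mul_add_div_eq_and_mod_eq (index_lt hκ.strictMono h0 hidx0 hspec hχ)
    rw [hιl, hδ, hγ]
    exact add_le_add_right (apply_index_le h0 hidx0 hspec hχ) _

/-- φ extends ι⁻¹: for every λ in the domain of ι, φ(ι(λ)) = λ; moreover ι(λ)
is the least σ (of the form ν + κ_α·δ + χ, χ < κ_α) with φ(σ) = λ. -/
theorem stmt7 (κ : Ordinal → Ordinal) (α ν lamMax : Ordinal)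
    (index : Ordinal → Ordinal) (ι φ : Ordinal → Ordinal)
    (hκ : Order.IsNormal κ) (h0 : κ 0 = 0)
    (heps : (omega0 : Ordinal) ^ α = α)
    (hν : ∃ ξ, ν = κ α * ξ)
    (hidx0 : index 0 = 0)
    (hidx : ∀ χ : Ordinal, 0 < χ → χ < κ α →
      index χ < α ∧ κ (index χ) ≤ χ ∧ χ < κ (index χ + 1))
    (hι : ∀ δ γ : Ordinal, γ < α → α * δ + γ ≤ lamMax →
      ι (α * δ + γ) = ν + κ α * δ + κ γ)
    (hφ : ∀ δ χ : Ordinal, χ < κ α → φ (ν + κ α * δ + χ) = α * δ + index χ) :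
    ∀ l ≤ lamMax, φ (ι l) = l ∧
      ∀ σ : Ordinal, (∃ δ χ, χ < κ α ∧ σ = ν + κ α * δ + χ) → φ σ = l →
        ι l ≤ σ :=
  stmt7_general κ α ν lamMax index ι φ hκ h0 heps hidx0 hidx hι hφ
end

section
/- If λ' is a limit multiple of α (λ' = α·δ with δ a limit ordinal) and ι is defined by ι(α·δ + γ) = ν + κ_α·δ + κ_γ with κ normal and κ_0 = 0, then ι(λ') is a limit multiple of κ_α: ι(λ') = ν + κ_α·δ where δ is a limit ordinal, and ι(λ') is the supremum of ι(β) over β < λ'. -/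
/-!
Every `β < α * δ` is `α * q + γ` with `q < δ` and `γ < α`, so `ι β = ν + κ α * q + κ γ` lies below
`ν + κ α * (q + 1) ≤ ν + κ α * δ`. Conversely `x ↦ ν + κ α * x` is normal, so at the limit `δ` its
value is the supremum of its values `ι (α * q)` at `q < δ`.
-/

open Ordinal

namespace Ordinal

variable {κ ι : Ordinal → Ordinal} {α ν lamMax : Ordinal}

theorem apply_mul_eq_of_forall_apply_mul_add (h0 : κ 0 = 0) (hα : 0 < α)
    (hι : ∀ δ γ : Ordinal, γ < α → α * δ + γ ≤ lamMax → ι (α * δ + γ) = ν + κ α * δ + κ γ)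
    {δ : Ordinal} (hdom : α * δ ≤ lamMax) :
    ι (α * δ) = ν + κ α * δ := by
  simpa [h0] using hι δ 0 hα (by simpa using hdom)

theorem apply_lt_of_forall_apply_mul_add (hκ : StrictMono κ) (hα : 0 < α)
    (hι : ∀ δ γ : Ordinal, γ < α → α * δ + γ ≤ lamMax → ι (α * δ + γ) = ν + κ α * δ + κ γ)
    {β δ : Ordinal} (hβ : β < α * δ) (hdom : α * δ ≤ lamMax) :
    ι β < ν + κ α * δ := by
  have hdecomp : α * (β / α) + β % α = β := div_add_mod β α
  have hmod : β % α < α := mod_lt β hα.ne'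
  have hdiv : β / α < δ := (lt_mul_iff_div_lt hα.ne').1 hβ
  have hιβ := hι (β / α) (β % α) hmod (by rw [hdecomp]; exact hβ.le.trans hdom)
  rw [hdecomp] at hιβ
  calc ι β = ν + (κ α * (β / α) + κ (β % α)) := by rw [hιβ, add_assoc]
    _ < ν + κ α * (β / α + 1) :=
      add_lt_add_right (lt_mul_add_one_iff.2 ⟨κ (β % α), hκ hmod, le_rfl⟩) ν
    _ ≤ ν + κ α * δ := add_le_add_right (mul_le_mul_right (Order.add_one_le_of_lt hdiv) _) ν

theorem le_iSup_apply_of_isSuccLimit (hκ : StrictMono κ) (h0 : κ 0 = 0) (hα : 0 < α)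
    (hι : ∀ δ γ : Ordinal, γ < α → α * δ + γ ≤ lamMax → ι (α * δ + γ) = ν + κ α * δ + κ γ)
    {δ : Ordinal} (hδ : Order.IsSuccLimit δ) (hdom : α * δ ≤ lamMax) :
    ν + κ α * δ ≤ ⨆ β : Set.Iio (α * δ), ι β.1 := by
  have hκα : 0 < κ α := h0 ▸ hκ hα
  have hnormal : Order.IsNormal (fun x => ν + κ α * x) :=
    (isNormal_add_right ν).comp (isNormal_mul_right hκα)
  refine (hnormal.le_iff_forall_le hδ).2 fun q hq => ?_
  have hmem : α * q ∈ Set.Iio (α * δ) := (isNormal_mul_right hα).strictMono hq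
  calc ν + κ α * q = ι (α * q) :=
        (apply_mul_eq_of_forall_apply_mul_add h0 hα hι
          ((mul_le_mul_right hq.le α).trans hdom)).symm
    _ ≤ _ := Ordinal.le_iSup (fun β : Set.Iio (α * δ) => ι β.1) ⟨_, hmem⟩

end Ordinal

theorem stmt8_general (κ : Ordinal → Ordinal) (α ν lamMax : Ordinal)
    (ι : Ordinal → Ordinal)
    (hκ : Order.IsNormal κ) (h0 : κ 0 = 0)
    (heps : (omega0 : Ordinal) ^ α = α)
    (hι : ∀ δ γ : Ordinal, γ < α → α * δ + γ ≤ lamMax →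
      ι (α * δ + γ) = ν + κ α * δ + κ γ)
    (δ : Ordinal) (hδ : Order.IsSuccLimit δ) (hdom : α * δ ≤ lamMax) :
    ι (α * δ) = ν + κ α * δ ∧
    ι (α * δ) = ⨆ β : Set.Iio (α * δ), ι β.1 := by
  have hα : 0 < α := heps ▸ opow_pos α omega0_pos
  have hιδ := apply_mul_eq_of_forall_apply_mul_add h0 hα hι hdom
  refine ⟨hιδ, hιδ ▸ le_antisymm ?_ ?_⟩
  · exact le_iSup_apply_of_isSuccLimit hκ.strictMono h0 hα hι hδ hdom
  · exact Ordinal.iSup_le fun β =>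
      (apply_lt_of_forall_apply_mul_add hκ.strictMono hα hι β.2 hdom).le

/-- If λ' = α·δ is a limit multiple of α, then ι(λ') = ν + κ_α·δ is a limit
multiple of κ_α, and ι(λ') is the supremum of ι(β) over β < λ'. -/
theorem stmt8 (κ : Ordinal → Ordinal) (α ν lamMax : Ordinal)
    (ι : Ordinal → Ordinal)
    (hκ : Order.IsNormal κ) (h0 : κ 0 = 0)
    (heps : (omega0 : Ordinal) ^ α = α)
    (hν : ∃ ξ, ν = κ α * ξ)
    (hι : ∀ δ γ : Ordinal, γ < α → α * δ + γ ≤ lamMax →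
      ι (α * δ + γ) = ν + κ α * δ + κ γ)
    (δ : Ordinal) (hδ : Order.IsSuccLimit δ) (hdom : α * δ ≤ lamMax) :
    ι (α * δ) = ν + κ α * δ ∧
    ι (α * δ) = ⨆ β : Set.Iio (α * δ), ι β.1 :=
  stmt8_general κ α ν lamMax ι hκ h0 heps hι δ hδ hdom
end
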